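/- arXiv:2003.04056 — 2 statements merged into one kernel-verified Lean document; each statement's English description precedes it below -/
import Mathlib

section
/- Let r, k be integers with 0 ≤ k ≤ r, let I_n = [t_{n-1}, t_n] be an interval, and let θ ∈ P_{r+1}(I_n, ℝ) be a polynomial of degree at most r+1 that vanishes at all r+1 nodes of a quadrature rule Q on I_n which is exact for all polynomials of degree ≤ 2r - k and whose nodes include t_n (and also t_{n-1} if k ≥ 1). Then for every polynomial φ ∈ P_{r-k}(I_n, ℝ), one has Q[θ'·φ] = -δ_{0,k}·θ(t_{n-1})·φ(t_{n-1}), where δ_{0,k} is the Kronecker delta. In particular, Q[θ'·φ] = 0 whenever k ≥ 1. -/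
open Polynomial

/-- Key quadrature identity used in the postprocessing theorem: let `Q` be a (linear)
quadrature functional on `[t₀, t₁]` that is exact for polynomials of degree `≤ 2r - k`
and whose nodes include `t₁` (and also `t₀` if `k ≥ 1`). Let `θ` be a polynomial of
degree `≤ r + 1` vanishing at all nodes of `Q` (with the Hermite multiplicities, so
that `Q[θ·ψ] = 0` for every polynomial `ψ`), and in particular `θ(t₁) = 0` and
`θ(t₀) = 0` if `k ≥ 1`. Then for every polynomial `φ` of degree `≤ r - k`,
`Q[θ'·φ] = -δ_{0,k} θ(t₀) φ(t₀)`; in particular `Q[θ'·φ] = 0` whenever `k ≥ 1`. -/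
theorem quadrature_bubble_identity (r k : ℕ) (hkr : k ≤ r) (t0 t1 : ℝ) (h01 : t0 < t1)
    (Q : (ℝ → ℝ) →ₗ[ℝ] ℝ)
    (hexact : ∀ p : ℝ[X], p.natDegree ≤ 2 * r - k →
      Q (fun t => p.eval t) = ∫ t in t0..t1, p.eval t)
    (θ : ℝ[X]) (hθdeg : θ.natDegree ≤ r + 1)
    (hθnodes : ∀ ψ : ℝ[X], Q (fun t => θ.eval t * ψ.eval t) = 0)
    (hθt1 : θ.eval t1 = 0) (hθt0 : 1 ≤ k → θ.eval t0 = 0)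
    (φ : ℝ[X]) (hφ : φ.natDegree ≤ r - k) :
    Q (fun t => (Polynomial.derivative θ).eval t * φ.eval t)
      = -(if k = 0 then (1:ℝ) else 0) * (θ.eval t0 * φ.eval t0) := by
  -- Fundamental theorem of calculus for the polynomial θ*φ
  have hftc : ∀ p : ℝ[X], (∫ t in t0..t1, (derivative p).eval t)
      = p.eval t1 - p.eval t0 := by
    intro p
    have heq : (∫ t in t0..t1, (derivative p).eval t)
        = ∫ t in t0..t1, deriv (fun x => p.eval x) t := by
      simp [Polynomial.deriv]
    rw [heq, intervalIntegral.integral_deriv_eq_sub (fun x _ => p.differentiable.differentiableAt)]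
    have : deriv (fun x => p.eval x) = fun x => (derivative p).eval x :=
      funext fun x => Polynomial.deriv p
    rw [this]
    exact (derivative p).continuous.intervalIntegrable _ _
  -- degree bound for θ' * φ
  have hdθ : (derivative θ).natDegree ≤ r :=
    le_trans (natDegree_derivative_le θ) (by omega)
  have h1 : Q (fun t => (derivative θ).eval t * φ.eval t)
      = ∫ t in t0..t1, (derivative θ * φ).eval t := by
    have := hexact (derivative θ * φ)
      (le_trans (natDegree_mul_le) (by omega))
    simpa [eval_mul] using this
  -- Q[θ * φ'] = 0, hence ∫ θ φ' = 0
  have h2 : (∫ t in t0..t1, (θ * derivative φ).eval t) = 0 := by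
    by_cases hc : derivative φ = 0
    · simp [hc]
    · have hφpos : 1 ≤ φ.natDegree := by
        by_contra h
        push_neg at h
        rw [Nat.lt_one_iff] at h
        exact hc (by rw [eq_C_of_natDegree_eq_zero h]; simp)
      have hdeg : (θ * derivative φ).natDegree ≤ 2 * r - k := by
        refine le_trans natDegree_mul_le ?_
        have := natDegree_derivative_le φ
        omega
      rw [← hexact _ hdeg]
      simpa [eval_mul] using hθnodes (derivative φ)
  -- integration by parts
  have hparts := hftc (θ * φ)
  rw [derivative_mul] at hparts
  have hsplit : (∫ t in t0..t1, (derivative θ * φ + θ * derivative φ).eval t)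
      = (∫ t in t0..t1, (derivative θ * φ).eval t)
        + (∫ t in t0..t1, (θ * derivative φ).eval t) := by
    simp only [eval_add]
    exact intervalIntegral.integral_add
      ((derivative θ * φ).continuous.intervalIntegrable _ _)
      ((θ * derivative φ).continuous.intervalIntegrable _ _)
  rw [hsplit, h2, add_zero] at hparts
  rw [h1, hparts]
  rcases Nat.eq_zero_or_pos k with hk | hk
  · simp [hk, hθt1]
  · have := hθt0 hk
    simp [Nat.pos_iff_ne_zero.mp hk, hθt1, this]
end

section
/- Let M be a regular d×d real matrix, A a d×d real matrix, f : ℝ → ℝ^d smooth, and consider the affine linear ODE M u'(t) = f(t) - A u(t). Suppose U is a piecewise polynomial solution (of degree ≤ r on each subinterval I_n of a partition) of the exactly-integrated variational condition ∫_{I_n} (M U' + A U, φ) dt + δ_{0,k}(M[U]_{n-1}, φ(t_{n-1}^+)) = ∫_{I_n} (f, φ) dt for all φ ∈ P_{r-k}(I_n, ℝ^d), together with the point conditions M U^{(i+1)}(t_n^-) = f^{(i)}(t_n^-) - A U^{(i)}(t_n^-) for 0 ≤ i ≤ ⌊k/2⌋-1 (if k ≥ 2) and M U^{(i+1)}(t_{n-1}^+)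 = f^{(i)}(t_{n-1}^+) - A U^{(i)}(t_{n-1}^+) for 0 ≤ i ≤ ⌊(k-1)/2⌋-1 (if k ≥ 3), and continuity U(t_{n-1}^+) = U(t_{n-1}^-) if k ≥ 1. Then for every integer j with 0 ≤ j ≤ ⌊(k-1)/2⌋ and every φ ∈ P_{r-k+j}(I_n, ℝ^d), the j-th derivative satisfies ∫_{I_n} (M (U^{(j)})' + A U^{(j)}, φ) dt = ∫_{I_n} (f^{(j)}, φ) dt. -/
open Polynomial Matrix intervalIntegral

/-- Residual of the `m`-th derivative equation. -/
noncomputable def eRes (d : ℕ) (M A : Matrix (Fin d) (Fin d) ℝ) (f : ℝ → Fin d → ℝ)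
    (U : Fin d → ℝ[X]) (m : ℕ) (t : ℝ) : Fin d → ℝ :=
  (M.mulVec fun j => (Polynomial.derivative^[m + 1] (U j)).eval t) +
    (A.mulVec fun j => (Polynomial.derivative^[m] (U j)).eval t) - iteratedDeriv m f t

theorem eRes_hasDerivAt (d : ℕ) (M A : Matrix (Fin d) (Fin d) ℝ)
    (f : ℝ → Fin d → ℝ) (hf : ContDiff ℝ (⊤ : ℕ∞) f) (U : Fin d → ℝ[X]) (m : ℕ) (t : ℝ)
    (φ : Fin d → ℝ[X]) :
    HasDerivAt (fun t => eRes d M A f U m t ⬝ᵥ (fun j => (φ j).eval t))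
      (eRes d M A f U (m+1) t ⬝ᵥ (fun j => (φ j).eval t)
        + eRes d M A f U m t ⬝ᵥ (fun j => (Polynomial.derivative (φ j)).eval t)) t := by
  have hfd : ∀ n : ℕ, Differentiable ℝ (iteratedDeriv n f) := fun n =>
    hf.differentiable_iteratedDeriv n (by exact_mod_cast ENat.natCast_lt_top n)
  have hfder : ∀ n (s : ℝ), HasDerivAt (iteratedDeriv n f) (iteratedDeriv (n+1) f s) s := by
    intro n s
    rw [iteratedDeriv_succ]
    exact ((hfd n) s).hasDerivAt
  have hpoly : ∀ (p : ℝ[X]) (n : ℕ),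
      HasDerivAt (fun s => (Polynomial.derivative^[n] p).eval s)
        ((Polynomial.derivative^[n+1] p).eval t) t := by
    intro p n
    rw [Function.iterate_succ_apply']
    exact (Polynomial.derivative^[n] p).hasDerivAt t
  have hcomp : ∀ (j : Fin d), HasDerivAt (fun s => eRes d M A f U m s j)
      (eRes d M A f U (m+1) t j) t := by
    intro j
    have h1 : HasDerivAt (fun s => iteratedDeriv m f s j) (iteratedDeriv (m+1) f t j) t :=
      hasDerivAt_pi.1 (hfder m t) j
    simp only [eRes, Pi.add_apply, Pi.sub_apply, Matrix.mulVec, dotProduct]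
    exact (((HasDerivAt.fun_sum fun i _ => (hpoly (U i) (m+1)).const_mul (M j i)).add
      (HasDerivAt.fun_sum fun i _ => (hpoly (U i) m).const_mul (A j i)))).sub h1
  have hgoal : ∀ (j : Fin d), HasDerivAt (fun s => eRes d M A f U m s j * (φ j).eval s)
      (eRes d M A f U (m+1) t j * (φ j).eval t
        + eRes d M A f U m t j * (Polynomial.derivative (φ j)).eval t) t :=
    fun j => (hcomp j).mul ((φ j).hasDerivAt t)
  have := HasDerivAt.fun_sum (u := Finset.univ) fun j (_ : j ∈ Finset.univ) => hgoal j
  simpa [dotProduct, Finset.sum_add_distrib] using this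

theorem eRes_continuous (d : ℕ) (M A : Matrix (Fin d) (Fin d) ℝ)
    (f : ℝ → Fin d → ℝ) (hf : ContDiff ℝ (⊤ : ℕ∞) f) (U : Fin d → ℝ[X]) (m : ℕ)
    (φ : Fin d → ℝ[X]) :
    Continuous (fun t => eRes d M A f U m t ⬝ᵥ (fun j => (φ j).eval t)) := by
  have hfc : Continuous (iteratedDeriv m f) :=
    (hf.differentiable_iteratedDeriv m (by exact_mod_cast ENat.natCast_lt_top m)).continuous
  simp only [eRes, dotProduct, Pi.add_apply, Pi.sub_apply, Matrix.mulVec]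
  refine continuous_finset_sum _ fun j _ => ?_
  refine (((continuous_finset_sum _ fun i _ => ?_).add
    (continuous_finset_sum _ fun i _ => ?_)).sub
      ((continuous_apply j).comp hfc)).mul (Polynomial.continuous _)
  · exact continuous_const.mul (Polynomial.continuous _)
  · exact continuous_const.mul (Polynomial.continuous _)

theorem polyDot_continuous (d : ℕ) (M A : Matrix (Fin d) (Fin d) ℝ)
    (U : Fin d → ℝ[X]) (m : ℕ) (φ : Fin d → ℝ[X]) :
    Continuous (fun t => ((M.mulVec fun j => (Polynomial.derivative^[m + 1] (U j)).eval t) +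
      A.mulVec fun j => (Polynomial.derivative^[m] (U j)).eval t) ⬝ᵥ
        (fun j => (φ j).eval t)) := by
  simp only [dotProduct, Pi.add_apply, Matrix.mulVec]
  refine continuous_finset_sum _ fun j _ => ?_
  exact (((continuous_finset_sum _ fun i _ => continuous_const.mul (Polynomial.continuous _)).add
    (continuous_finset_sum _ fun i _ => continuous_const.mul (Polynomial.continuous _)))).mul
      (Polynomial.continuous _)

theorem fDot_continuous (d : ℕ) (f : ℝ → Fin d → ℝ) (hf : ContDiff ℝ (⊤ : ℕ∞) f) (m : ℕ)
    (φ : Fin d → ℝ[X]) :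
    Continuous (fun t => iteratedDeriv m f t ⬝ᵥ (fun j => (φ j).eval t)) := by
  have hfc : Continuous (iteratedDeriv m f) :=
    (hf.differentiable_iteratedDeriv m (by exact_mod_cast ENat.natCast_lt_top m)).continuous
  simp only [dotProduct]
  exact continuous_finset_sum _ fun j _ =>
    ((continuous_apply j).comp hfc).mul (Polynomial.continuous _)

/-- Variational formulation for the j-th derivative (Theorem 5.1, case
`0 ≤ j ≤ ⌊(k-1)/2⌋`, exact integration): if the piecewise polynomial `U` of degree
`≤ r` on `I_n = [a,b]` solves the exactly-integrated variational condition (with jump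
term for `k = 0`) together with the collocation point conditions at `b` (for `k ≥ 2`)
and at `a` (for `k ≥ 3`) and the continuity condition (for `k ≥ 1`) for the affine
linear system `M u' = f - A u`, then for every `0 ≤ j ≤ ⌊(k-1)/2⌋` and every test
function `φ ∈ P_{r-k+j}(I_n, ℝ^d)`,
`∫ (M (U^{(j)})' + A U^{(j)}, φ) = ∫ (f^{(j)}, φ)`. -/
theorem vtd_derivative_variational (d r k : ℕ) (hkr : k ≤ r)
    (M A : Matrix (Fin d) (Fin d) ℝ) (hM : IsUnit M.det)
    (f : ℝ → Fin d → ℝ) (hf : ContDiff ℝ (⊤ : ℕ∞) f)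
    (a b : ℝ) (hab : a < b)
    (U : Fin d → ℝ[X]) (hUdeg : ∀ j, (U j).natDegree ≤ r)
    (Uprev : Fin d → ℝ)
    (hvar : ∀ φ : Fin d → ℝ[X], (∀ j, (φ j).natDegree ≤ r - k) →
      (∫ t in a..b,
        ((M.mulVec fun j => ((Polynomial.derivative (U j)).eval t)) +
          A.mulVec fun j => (U j).eval t) ⬝ᵥ (fun j => (φ j).eval t))
        + (if k = 0 then (1:ℝ) else 0) *
            ((M.mulVec ((fun j => (U j).eval a) - Uprev)) ⬝ᵥ fun j => (φ j).eval a)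
        = ∫ t in a..b, f t ⬝ᵥ (fun j => (φ j).eval t))
    (hE : ∀ i : ℕ, i < k / 2 →
      M.mulVec (fun j => (Polynomial.derivative^[i + 1] (U j)).eval b)
        = iteratedDeriv i f b - A.mulVec fun j => (Polynomial.derivative^[i] (U j)).eval b)
    (hA : ∀ i : ℕ, (i : ℤ) < ((k : ℤ) - 1) / 2 →
      M.mulVec (fun j => (Polynomial.derivative^[i + 1] (U j)).eval a)
        = iteratedDeriv i f a - A.mulVec fun j => (Polynomial.derivative^[i] (U j)).eval a)
    (hcont : 1 ≤ k → (fun j => (U j).eval a) = Uprev) :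
    ∀ j' : ℕ, (j' : ℤ) ≤ ((k : ℤ) - 1) / 2 →
      ∀ φ : Fin d → ℝ[X], (∀ j, (φ j).natDegree ≤ r - k + j') →
        (∫ t in a..b,
          ((M.mulVec fun j => (Polynomial.derivative^[j' + 1] (U j)).eval t) +
            A.mulVec fun j => (Polynomial.derivative^[j'] (U j)).eval t) ⬝ᵥ
              (fun j => (φ j).eval t))
          = ∫ t in a..b, iteratedDeriv j' f t ⬝ᵥ (fun j => (φ j).eval t) := by
  have hsplit : ∀ (m : ℕ) (φ : Fin d → ℝ[X]),
      (∫ t in a..b, eRes d M A f U m t ⬝ᵥ (fun j => (φ j).eval t))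
        = (∫ t in a..b,
            ((M.mulVec fun j => (Polynomial.derivative^[m + 1] (U j)).eval t) +
              A.mulVec fun j => (Polynomial.derivative^[m] (U j)).eval t) ⬝ᵥ
                (fun j => (φ j).eval t))
          - ∫ t in a..b, iteratedDeriv m f t ⬝ᵥ (fun j => (φ j).eval t) := by
    intro m φ
    rw [← intervalIntegral.integral_sub
      ((polyDot_continuous d M A U m φ).intervalIntegrable a b)
      ((fDot_continuous d f hf m φ).intervalIntegrable a b)]
    congr 1
    funext t
    rw [eRes, sub_dotProduct]
  have main : ∀ m : ℕ, (m : ℤ) ≤ ((k : ℤ) - 1) / 2 →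
      ∀ φ : Fin d → ℝ[X], (∀ j, (φ j).natDegree ≤ r - k + m) →
        (∫ t in a..b, eRes d M A f U m t ⬝ᵥ (fun j => (φ j).eval t)) = 0 := by
    intro m
    induction m with
    | zero =>
      intro hk φ hφ
      have hk1 : 1 ≤ k := by omega
      have hv := hvar φ (fun j => by simpa using hφ j)
      rw [if_neg (by omega), zero_mul, add_zero] at hv
      rw [hsplit 0 φ]
      simp only [zero_add, Function.iterate_one, Function.iterate_zero, id_eq,
        iteratedDeriv_zero]
      rw [sub_eq_zero]
      exact hv
    | succ n ih =>
      intro hk φ hφ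
      have hk2 : 2 * n + 3 ≤ k := by omega
      have hEb : eRes d M A f U n b = 0 := by
        rw [eRes, hE n (by omega)]
        abel
      have hAa : eRes d M A f U n a = 0 := by
        rw [eRes, hA n (by omega)]
        abel
      have hibp := intervalIntegral.integral_eq_sub_of_hasDerivAt
        (f := fun t => eRes d M A f U n t ⬝ᵥ (fun j => (φ j).eval t))
        (fun t _ => eRes_hasDerivAt d M A f hf U n t φ)
        (((eRes_continuous d M A f hf U (n+1) φ).add
          (eRes_continuous d M A f hf U n (fun j => Polynomial.derivative (φ j)))).intervalIntegrable a b)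
      simp only [hEb, hAa, zero_dotProduct, sub_zero, sub_self] at hibp
      rw [intervalIntegral.integral_add
        ((eRes_continuous d M A f hf U (n+1) φ).intervalIntegrable a b)
        ((eRes_continuous d M A f hf U n (fun j => Polynomial.derivative (φ j))).intervalIntegrable a b)] at hibp
      have h2 := ih (by omega) (fun j => Polynomial.derivative (φ j))
        (fun j => le_trans (Polynomial.natDegree_derivative_le _) (by have := hφ j; omega))
      rw [h2, add_zero] at hibp
      exact hibp
  intro j' hj' φ hφ
  have h := main j' hj' φ hφ
  rw [hsplit j' φ] at h
  exact sub_eq_zero.1 h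
end
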